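/- Let n ≥ 2 be an integer, let μ = j_{n/2−1,1} be the smallest positive zero of J_{n/2−1}, and let ρ_n ∈ (0, μ) be the unique zero of t J_{n/2−1}(t) − (n−1) J_{n/2}(t) in (0, μ). Then the function h(t) = t^{1−n/2} J_{n/2}(t) is strictly increasing on (0, ρ_n) and strictly decreasing on (ρ_n, μ). -/

import Mathlib

/-!
Write `J_ν(x) = (x/2)^ν G_ν(x²/4)` with `G_ν(y) = ∑ (-1)^k y^k / (k! Γ(ν+k+1))` entire. Then
`h(t) = t G_ν(t²/4) / 2^ν` and `h'(t) = H_ν(t²/4) / 2^ν`, where `H_ν = G_ν - 2y G_{ν+1}`; the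
recurrence `G_{ν-1} = ν G_ν - y G_{ν+1}` gives `t J_{ν-1}(t) - (2ν-1) J_ν(t) = (t/2)^ν H_ν(t²/4)`,
so for `ν = n/2` the derivative `h'` vanishes on `(0, μ)` only at `ρₙ`. It is positive at `0`, and
negative at `μ` because `G_{ν-1}(μ²/4) = 0` while `G_ν(μ²/4) > 0`: indeed `(t²/4)^ν G_ν(t²/4)`
increases from `0` on `[0, μ]`, its derivative being a positive multiple of `G_{ν-1}(t²/4) > 0`.
The intermediate value theorem then fixes the sign of `h'` on `(0, ρₙ)` and on `(ρₙ, μ)`.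
-/

open Set

/-- Bessel function of the first kind of order `ν`, defined by its power series
(real exponents; intended for `x > 0`). -/
noncomputable def besselJ (ν x : ℝ) : ℝ :=
  ∑' k : ℕ, ((-1 : ℝ) ^ k / (Nat.factorial k * Real.Gamma (ν + k + 1))) *
    (x / 2) ^ (2 * (k : ℝ) + ν)

theorem pos_on_Ico_of_ne_zero_on_Ioo {f : ℝ → ℝ} {a b : ℝ} (hf : ContinuousOn f (Ico a b))
    (ha : 0 < f a) (hne : ∀ x ∈ Ioo a b, f x ≠ 0) : ∀ x ∈ Ico a b, 0 < f x := by
  intro x hx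
  by_contra! hfx
  obtain ⟨y, hy, hfy⟩ := isPreconnected_Icc.intermediate_value₂ (right_mem_Icc.2 hx.1)
    (left_mem_Icc.2 hx.1) (hf.mono (Icc_subset_Ico_right hx.2)) continuousOn_const hfx ha.le
  rcases hy.1.eq_or_lt with rfl | hay
  · exact ha.ne' hfy
  · exact hne y ⟨hay, hy.2.trans_lt hx.2⟩ hfy

theorem neg_on_Ioc_of_ne_zero_on_Ioo {f : ℝ → ℝ} {a b : ℝ} (hf : ContinuousOn f (Ioc a b))
    (hb : f b < 0) (hne : ∀ x ∈ Ioo a b, f x ≠ 0) : ∀ x ∈ Ioc a b, f x < 0 := by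
  intro x hx
  by_contra! hfx
  obtain ⟨y, hy, hfy⟩ := isPreconnected_Icc.intermediate_value₂ (right_mem_Icc.2 hx.2)
    (left_mem_Icc.2 hx.2) (hf.mono (Icc_subset_Ioc_left hx.1)) continuousOn_const hb.le hfx
  rcases hy.2.eq_or_lt with rfl | hyb
  · exact hb.ne hfy
  · exact hne y ⟨hx.1.trans_le hy.1, hyb⟩ hfy

theorem Real.Gamma_le_Gamma_add_nat {x : ℝ} (hx : 1 ≤ x) (k : ℕ) :
    Real.Gamma x ≤ Real.Gamma (x + k) := by
  induction k with
  | zero => simp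
  | succ k ih =>
    have hxk : 1 ≤ x + k := by have := k.cast_nonneg (α := ℝ); linarith
    rw [Nat.cast_succ, ← add_assoc, Real.Gamma_add_one (by linarith)]
    exact ih.trans (le_mul_of_one_le_left (Real.Gamma_pos_of_pos (by linarith)).le hxk)

noncomputable def besselCoeff (ν : ℝ) (k : ℕ) : ℝ :=
  (-1 : ℝ) ^ k / (Nat.factorial k * Real.Gamma (ν + k + 1))

noncomputable def besselG (ν y : ℝ) : ℝ := ∑' k : ℕ, besselCoeff ν k * y ^ k

noncomputable def besselH (ν y : ℝ) : ℝ := besselG ν y - 2 * y * besselG (ν + 1) y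

section Coefficients

variable {ν : ℝ}

theorem abs_besselCoeff_le (hν : 0 ≤ ν) (k : ℕ) :
    |besselCoeff ν k| ≤ (Real.Gamma (ν + 1))⁻¹ / k.factorial := by
  have hΓ : 0 < Real.Gamma (ν + 1) := Real.Gamma_pos_of_pos (by linarith)
  have hΓk : Real.Gamma (ν + 1) ≤ Real.Gamma (ν + k + 1) := by
    simpa only [add_right_comm] using Real.Gamma_le_Gamma_add_nat (x := ν + 1) (by linarith) k
  rw [besselCoeff, abs_div, abs_pow, abs_neg, abs_one, one_pow,
    abs_of_pos (by positivity), one_div, mul_inv, mul_comm, div_eq_mul_inv]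
  gcongr

theorem summable_besselCoeff_mul_pow (hν : 0 ≤ ν) (y : ℝ) :
    Summable fun k ↦ besselCoeff ν k * y ^ k := by
  refine .of_norm_bounded ((Real.summable_pow_div_factorial |y|).mul_left
    (Real.Gamma (ν + 1))⁻¹) fun k ↦ ?_
  rw [norm_mul, norm_pow, Real.norm_eq_abs, Real.norm_eq_abs]
  calc |besselCoeff ν k| * |y| ^ k ≤ (Real.Gamma (ν + 1))⁻¹ / k.factorial * |y| ^ k := by
        gcongr; exact abs_besselCoeff_le hν k
    _ = _ := by ring

variable (ν) in
theorem besselCoeff_succ (k : ℕ) :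
    besselCoeff ν (k + 1) = -besselCoeff (ν + 1) k / (k + 1) := by
  rw [besselCoeff, besselCoeff, Nat.factorial_succ, pow_succ]
  push_cast
  simp only [div_eq_mul_inv, mul_inv]
  ring_nf

theorem besselCoeff_sub_one (hν : 0 < ν) (k : ℕ) :
    besselCoeff (ν - 1) k = (ν + k) * besselCoeff ν k := by
  have hνk : ν + k ≠ 0 := by positivity
  rw [besselCoeff, besselCoeff, show ν - 1 + k + 1 = ν + k by ring, Real.Gamma_add_one hνk]
  field_simp

end Coefficients

section SeriesG

variable {ν : ℝ}

theorem tsum_besselCoeff_mul_deriv_pow (hν : 0 ≤ ν) (y : ℝ) :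
    ∑' k : ℕ, besselCoeff ν k * (k * y ^ (k - 1)) = -besselG (ν + 1) y := by
  have hshift : (fun k : ℕ ↦ besselCoeff ν (k + 1) * ((k + 1 : ℕ) * y ^ (k + 1 - 1))) =
      fun k ↦ -(besselCoeff (ν + 1) k * y ^ k) := by
    funext k
    have hk : (k + 1 : ℝ) ≠ 0 := by positivity
    rw [besselCoeff_succ, Nat.add_sub_cancel, Nat.cast_succ]
    field_simp
  have hsummable :
      Summable fun k : ℕ ↦ besselCoeff ν (k + 1) * ((k + 1 : ℕ) * y ^ (k + 1 - 1)) := by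
    rw [hshift]
    exact (summable_besselCoeff_mul_pow (by linarith : 0 ≤ ν + 1) y).neg
  have hs : Summable fun k : ℕ ↦ besselCoeff ν k * (k * y ^ (k - 1)) :=
    (summable_nat_add_iff 1).1 hsummable
  rw [hs.tsum_eq_zero_add, hshift, tsum_neg, besselG]
  simp

theorem hasDerivAt_besselG (hν : 0 ≤ ν) (y : ℝ) :
    HasDerivAt (besselG ν) (-besselG (ν + 1) y) y := by
  set R := |y| + 1
  have hR : 1 ≤ R := le_add_of_nonneg_left (abs_nonneg y)
  have hyR : y ∈ Ioo (-R) R := abs_lt.1 (lt_add_one |y|)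
  have hbound : ∀ (k : ℕ), ∀ z ∈ Ioo (-R) R, ‖besselCoeff ν k * (k * z ^ (k - 1))‖ ≤
      (Real.Gamma (ν + 1))⁻¹ * ((2 * R) ^ k / k.factorial) := by
    intro k z hz
    have hzR : |z| ≤ R := abs_le.2 ⟨hz.1.le, hz.2.le⟩
    have hk : (k : ℝ) ≤ 2 ^ k := by exact_mod_cast (Nat.lt_two_pow_self (n := k)).le
    have hpow : |z| ^ (k - 1) ≤ R ^ k :=
      (pow_le_pow_left₀ (abs_nonneg z) hzR _).trans (pow_le_pow_right₀ hR (Nat.sub_le k 1))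
    rw [norm_mul, norm_mul, norm_pow, Real.norm_eq_abs, Real.norm_eq_abs, Real.norm_eq_abs,
      Nat.abs_cast]
    calc |besselCoeff ν k| * (k * |z| ^ (k - 1))
        ≤ (Real.Gamma (ν + 1))⁻¹ / k.factorial * (2 ^ k * R ^ k) := by
          gcongr
          exact abs_besselCoeff_le hν k
      _ = _ := by rw [mul_pow]; ring
  have hderiv : HasDerivAt (besselG ν) _ y := hasDerivAt_tsum_of_isPreconnected
    ((Real.summable_pow_div_factorial (2 * R)).mul_left _) isOpen_Ioo isPreconnected_Ioo
    (fun k z _ ↦ (hasDerivAt_pow k z).const_mul (besselCoeff ν k)) hbound hyR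
    (summable_besselCoeff_mul_pow hν y) hyR
  rwa [tsum_besselCoeff_mul_deriv_pow hν] at hderiv

theorem continuous_besselG (hν : 0 ≤ ν) : Continuous (besselG ν) :=
  continuous_iff_continuousAt.2 fun y ↦ (hasDerivAt_besselG hν y).continuousAt

variable (ν) in
theorem besselG_zero : besselG ν 0 = (Real.Gamma (ν + 1))⁻¹ := by
  rw [besselG, tsum_eq_single 0 fun k hk ↦ by simp [zero_pow hk]]
  simp [besselCoeff]

theorem besselG_sub_one (hν : 1 ≤ ν) (y : ℝ) :
    besselG (ν - 1) y = ν * besselG ν y - y * besselG (ν + 1) y := by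
  have hsummable (ν' : ℝ) (h : 0 ≤ ν') := summable_besselCoeff_mul_pow h y
  set f : ℕ → ℝ := fun k ↦ ν * (besselCoeff ν k * y ^ k) - besselCoeff (ν - 1) k * y ^ k
  have hf : Summable f := ((hsummable ν (by linarith)).mul_left ν).sub (hsummable _ (by linarith))
  have hshift : (fun k ↦ f (k + 1)) = fun k ↦ y * (besselCoeff (ν + 1) k * y ^ k) := by
    funext k
    have hk : (k + 1 : ℝ) ≠ 0 := by positivity
    simp only [f, besselCoeff_sub_one (by linarith : 0 < ν), besselCoeff_succ]
    push_cast
    linear_combination besselCoeff (ν + 1) k * y ^ (k + 1) * mul_inv_cancel₀ hk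
  have hf0 : f 0 = 0 := by simp [f, besselCoeff_sub_one (by linarith : 0 < ν)]
  have hsum : ∑' k, f k = y * besselG (ν + 1) y := by
    rw [hf.tsum_eq_zero_add, hf0, hshift, tsum_mul_left, zero_add, besselG]
  rw [Summable.tsum_sub ((hsummable ν (by linarith)).mul_left ν) (hsummable _ (by linarith)),
    tsum_mul_left] at hsum
  simp only [besselG] at hsum ⊢
  linarith

end SeriesG

theorem hasDerivAt_sq_div_four (t : ℝ) : HasDerivAt (fun s : ℝ ↦ s ^ 2 / 4) (t / 2) t :=
  ((hasDerivAt_pow 2 t).div_const 4).congr_deriv (by push_cast; ring)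

section BesselJ

variable {ν : ℝ}

theorem besselJ_eq_rpow_mul_besselG {x : ℝ} (hx : 0 < x) :
    besselJ ν x = (x / 2) ^ ν * besselG ν (x ^ 2 / 4) := by
  rw [besselJ, besselG, ← tsum_mul_left]
  congr 1 with k
  have hexp : (x / 2) ^ (2 * (k : ℝ) + ν) = (x ^ 2 / 4) ^ k * (x / 2) ^ ν := by
    rw [Real.rpow_add (by positivity), mul_comm, Real.rpow_mul (by positivity)]
    norm_num [div_pow]
    ring
  rw [hexp, besselCoeff]
  ring

theorem besselJ_eq_zero_iff {x : ℝ} (hx : 0 < x) :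
    besselJ ν x = 0 ↔ besselG ν (x ^ 2 / 4) = 0 := by
  rw [besselJ_eq_rpow_mul_besselG hx, mul_eq_zero,
    or_iff_right (Real.rpow_pos_of_pos (by positivity) ν).ne']

theorem hasDerivAt_rpow_mul_besselG (hν : 1 ≤ ν) {y : ℝ} (hy : 0 < y) :
    HasDerivAt (fun y ↦ y ^ ν * besselG ν y) (y ^ (ν - 1) * besselG (ν - 1) y) y := by
  refine ((Real.hasDerivAt_rpow_const (Or.inl hy.ne')).mul
    (hasDerivAt_besselG (by linarith) y)).congr_deriv ?_
  rw [besselG_sub_one hν, Real.rpow_sub_one hy.ne']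
  field_simp
  ring

theorem besselH_eq (hν : 1 ≤ ν) (y : ℝ) :
    besselH ν y = 2 * besselG (ν - 1) y - (2 * ν - 1) * besselG ν y := by
  rw [besselH, besselG_sub_one hν]
  ring

theorem continuous_besselH (hν : 0 ≤ ν) : Continuous (besselH ν) :=
  (continuous_besselG hν).sub
    ((continuous_const.mul continuous_id).mul (continuous_besselG (by linarith)))

theorem besselH_zero_pos (hν : 0 ≤ ν) : 0 < besselH ν 0 := by
  rw [besselH, besselG_zero, mul_zero, zero_mul, sub_zero]
  exact inv_pos.2 (Real.Gamma_pos_of_pos (by linarith))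

theorem mul_besselJ_sub_one_sub (hν : 1 ≤ ν) {t : ℝ} (ht : 0 < t) :
    t * besselJ (ν - 1) t - (2 * ν - 1) * besselJ ν t = (t / 2) ^ ν * besselH ν (t ^ 2 / 4) := by
  have hts : t * (t / 2) ^ (ν - 1) = 2 * (t / 2) ^ ν := by
    rw [Real.rpow_sub_one (by positivity)]
    field_simp
  rw [besselJ_eq_rpow_mul_besselG ht, besselJ_eq_rpow_mul_besselG ht, besselH_eq hν,
    ← mul_assoc, hts]
  ring

theorem hasDerivAt_rpow_one_sub_mul_besselJ (hν : 0 ≤ ν) {t : ℝ} (ht : 0 < t) :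
    HasDerivAt (fun s ↦ s ^ (1 - ν) * besselJ ν s) (besselH ν (t ^ 2 / 4) / 2 ^ ν) t := by
  have hG := (hasDerivAt_besselG hν (t ^ 2 / 4)).comp t (hasDerivAt_sq_div_four t)
  have hderiv : HasDerivAt (fun s ↦ s * besselG ν (s ^ 2 / 4) / 2 ^ ν)
      ((1 * besselG ν (t ^ 2 / 4) + t * (-besselG (ν + 1) (t ^ 2 / 4) * (t / 2))) / 2 ^ ν) t :=
    ((hasDerivAt_id' t).mul hG).div_const _
  refine (hderiv.congr_of_eventuallyEq ?_).congr_deriv ?_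
  · filter_upwards [Ioi_mem_nhds ht] with s hs
    have hsν : s ^ (1 - ν) * s ^ ν = s := by
      rw [← Real.rpow_add hs, sub_add_cancel, Real.rpow_one]
    rw [besselJ_eq_rpow_mul_besselG hs, Real.div_rpow hs.le zero_le_two]
    calc s ^ (1 - ν) * (s ^ ν / 2 ^ ν * besselG ν (s ^ 2 / 4))
        = s ^ (1 - ν) * s ^ ν * besselG ν (s ^ 2 / 4) / 2 ^ ν := by ring
      _ = s * besselG ν (s ^ 2 / 4) / 2 ^ ν := by rw [hsν]
  · rw [besselH]
    ring

end BesselJ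

section FirstZero

variable {ν μ : ℝ} (hν : 1 ≤ ν) (hμ : IsLeast {x : ℝ | 0 < x ∧ besselJ (ν - 1) x = 0} μ)
include hν hμ

theorem besselG_sub_one_pos_of_lt_first_zero :
    ∀ t ∈ Ico 0 μ, 0 < besselG (ν - 1) (t ^ 2 / 4) := by
  have hcont : Continuous fun t : ℝ ↦ besselG (ν - 1) (t ^ 2 / 4) :=
    (continuous_besselG (by linarith)).comp (by fun_prop)
  refine pos_on_Ico_of_ne_zero_on_Ioo hcont.continuousOn ?_ fun t ht hzero ↦ ?_
  · rw [zero_pow two_ne_zero, zero_div, besselG_zero, sub_add_cancel]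
    exact inv_pos.2 (Real.Gamma_pos_of_pos (by linarith))
  · exact ht.2.not_ge (hμ.2 ⟨ht.1, (besselJ_eq_zero_iff ht.1).2 hzero⟩)

theorem besselG_pos_at_first_zero : 0 < besselG ν (μ ^ 2 / 4) := by
  have hμ0 : 0 < μ := hμ.1.1
  have hmono : StrictMonoOn (fun t : ℝ ↦ (t ^ 2 / 4) ^ ν * besselG ν (t ^ 2 / 4)) (Icc 0 μ) := by
    refine strictMonoOn_of_hasDerivWithinAt_pos (convex_Icc 0 μ)
      (f' := fun t ↦ (t ^ 2 / 4) ^ (ν - 1) * besselG (ν - 1) (t ^ 2 / 4) * (t / 2))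
      (Continuous.continuousOn ?_) (fun t ht ↦ ?_) (fun t ht ↦ ?_)
    · exact ((Real.continuous_rpow_const (by linarith)).mul
        (continuous_besselG (by linarith))).comp (by fun_prop)
    · rw [interior_Icc] at ht
      exact ((hasDerivAt_rpow_mul_besselG hν (div_pos (pow_pos ht.1 2) four_pos)).comp t
        (hasDerivAt_sq_div_four t)).hasDerivWithinAt
    · rw [interior_Icc] at ht
      have hG := besselG_sub_one_pos_of_lt_first_zero hν hμ t ⟨ht.1.le, ht.2⟩
      have ht0 := ht.1
      positivity
  have h := hmono (left_mem_Icc.2 hμ0.le) (right_mem_Icc.2 hμ0.le) hμ0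
  simp only [ne_eq, OfNat.ofNat_ne_zero, not_false_eq_true, zero_pow, zero_div,
    Real.zero_rpow (by linarith : ν ≠ 0), zero_mul] at h
  exact pos_of_mul_pos_right h (by positivity)

theorem besselH_neg_at_first_zero : besselH ν (μ ^ 2 / 4) < 0 := by
  have hG : besselG (ν - 1) (μ ^ 2 / 4) = 0 := (besselJ_eq_zero_iff hμ.1.1).1 hμ.1.2
  rw [besselH_eq hν, hG]
  nlinarith [besselG_pos_at_first_zero hν hμ]

end FirstZero

theorem radial_derivative_monotone_general (n : ℕ) (hn : 2 ≤ n) (μ : ℝ)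
    (hμ : IsLeast {x : ℝ | 0 < x ∧ besselJ ((n : ℝ) / 2 - 1) x = 0} μ)
    (ρₙ : ℝ) (hρₙmem : ρₙ ∈ Set.Ioo (0 : ℝ) μ)
    (hρₙuniq : ∀ ρ' ∈ Set.Ioo (0 : ℝ) μ,
      ρ' * besselJ ((n : ℝ) / 2 - 1) ρ' - ((n : ℝ) - 1) * besselJ ((n : ℝ) / 2) ρ' = 0 →
      ρ' = ρₙ) :
    StrictMonoOn (fun t : ℝ => t ^ (1 - (n : ℝ) / 2) * besselJ ((n : ℝ) / 2) t)
      (Set.Ioo 0 ρₙ) ∧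
    StrictAntiOn (fun t : ℝ => t ^ (1 - (n : ℝ) / 2) * besselJ ((n : ℝ) / 2) t)
      (Set.Ioo ρₙ μ) := by
  have hν : 1 ≤ (n : ℝ) / 2 := by
    rw [le_div_iff₀ two_pos, one_mul]
    exact_mod_cast hn
  obtain ⟨hρ, hρμ⟩ := hρₙmem
  have hH : Continuous fun t : ℝ ↦ besselH (n / 2) (t ^ 2 / 4) :=
    (continuous_besselH (by linarith)).comp (by fun_prop)
  have hzero : ∀ t ∈ Ioo 0 μ, t ≠ ρₙ → besselH (n / 2) (t ^ 2 / 4) ≠ 0 := fun t ht hne h ↦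
    hne <| hρₙuniq t ht <| by
      rw [show (n : ℝ) - 1 = 2 * (n / 2) - 1 by ring, mul_besselJ_sub_one_sub hν ht.1, h,
        mul_zero]
  have hpos := pos_on_Ico_of_ne_zero_on_Ioo hH.continuousOn
    (by simpa using besselH_zero_pos (by linarith : (0 : ℝ) ≤ n / 2))
    fun t ht ↦ hzero t ⟨ht.1, ht.2.trans hρμ⟩ ht.2.ne
  have hneg := neg_on_Ioc_of_ne_zero_on_Ioo hH.continuousOn
    (besselH_neg_at_first_zero hν hμ) fun t ht ↦ hzero t ⟨hρ.trans ht.1, ht.2⟩ ht.1.ne'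
  have hderiv {t : ℝ} (ht : 0 < t) :=
    hasDerivAt_rpow_one_sub_mul_besselJ (ν := n / 2) (by linarith) ht
  constructor
  · refine strictMonoOn_of_hasDerivWithinAt_pos (convex_Ioo 0 ρₙ)
      (fun t ht ↦ (hderiv ht.1).continuousAt.continuousWithinAt)
      (fun t ht ↦ (hderiv (interior_subset ht).1).hasDerivWithinAt) fun t ht ↦ ?_
    rw [interior_Ioo] at ht
    exact div_pos (hpos t ⟨ht.1.le, ht.2⟩) (by positivity)
  · refine strictAntiOn_of_hasDerivWithinAt_neg (convex_Ioo ρₙ μ)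
      (fun t ht ↦ (hderiv (hρ.trans ht.1)).continuousAt.continuousWithinAt)
      (fun t ht ↦ (hderiv (hρ.trans (interior_subset ht).1)).hasDerivWithinAt) fun t ht ↦ ?_
    rw [interior_Ioo] at ht
    exact div_neg_of_neg_of_pos (hneg t ⟨ht.1, ht.2.le⟩) (by positivity)

/-- `h(t) = t^{1−n/2} J_{n/2}(t)` is strictly increasing on `(0, ρₙ)`
and strictly decreasing on `(ρₙ, μ)`. -/
theorem radial_derivative_monotone (n : ℕ) (hn : 2 ≤ n) (μ : ℝ)
    (hμ : IsLeast {x : ℝ | 0 < x ∧ besselJ ((n : ℝ) / 2 - 1) x = 0} μ)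
    (ρₙ : ℝ) (hρₙmem : ρₙ ∈ Set.Ioo (0 : ℝ) μ)
    (hρₙ : ρₙ * besselJ ((n : ℝ) / 2 - 1) ρₙ - ((n : ℝ) - 1) * besselJ ((n : ℝ) / 2) ρₙ = 0)
    (hρₙuniq : ∀ ρ' ∈ Set.Ioo (0 : ℝ) μ,
      ρ' * besselJ ((n : ℝ) / 2 - 1) ρ' - ((n : ℝ) - 1) * besselJ ((n : ℝ) / 2) ρ' = 0 →
      ρ' = ρₙ) :
    StrictMonoOn (fun t : ℝ => t ^ (1 - (n : ℝ) / 2) * besselJ ((n : ℝ) / 2) t)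
      (Set.Ioo 0 ρₙ) ∧
    StrictAntiOn (fun t : ℝ => t ^ (1 - (n : ℝ) / 2) * besselJ ((n : ℝ) / 2) t)
      (Set.Ioo ρₙ μ) :=
  radial_derivative_monotone_general n hn μ hμ ρₙ hρₙmem hρₙuniq
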